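/- The number of leaves of a uniform random rooted map with n edges converges in distribution to a Poisson law of parameter 1: for every integer k ≥ 0, lim_{n→∞} ℓ_{n,k}/m(n) = e^{−1}/k!. -/

import Mathlib

/-!
Shifting the variable by one, the binomial moments `b n r = ∑ ν, ℓ_{n,ν} * ν.choose r` (the
coefficients of `ℓ_n (1 + x)`) satisfy a recurrence that is triangular in `r`: for `n ≥ 1`,
`b (n+1) (r+1) = (2n+2-r) b n (r+1) + b n r + I`, where `I` collects the terms `0 < i < n` of a
convolution of moments. The terms `m i * m (n - i)` decrease towards the middle, so this inner part of the convolution of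
`m` is `O(m (n-1)) = o(m n)` and `m (n+1) = (2n+3) m n + o(m n)`; with the a priori bound
`b n r ≤ 4^r m n`, the inner convolution of the moments is `o(m n)` too. Hence `b n (r+1) / m n`
satisfies `x_{n+1} = (1 - a_n) x_n + c_n` with `a_n ≈ (r+1)/(2n)` and `c_n ≈ a_n / (r+1)!`, and
induction on `r` gives `b n r / m n → 1/r!`: the binomial moments of a Poisson law of parameter
`1`. The Bonferroni inequalities then sandwich `ℓ_{n,k} / m n` between consecutive alternating
partial sums of `∑ j, (-1)^j (k+j).choose k * b n (k+j) / m n`, whose limits converge to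
`e⁻¹ / k!`.
-/

open Polynomial Filter Finset Topology
open scoped Nat

namespace RootedMaps

theorem coeff_taylor_one_eq_sum {R : Type*} [CommSemiring R] (p : R[X]) {N : ℕ}
    (hN : p.natDegree < N) (r : ℕ) :
    (taylor 1 p).coeff r = ∑ ν ∈ range N, p.coeff ν * ν.choose r := by
  rw [taylor_apply, comp, eval₂_eq_sum_range' C hN, finsetSum_coeff]
  refine sum_congr rfl fun ν _ => ?_
  rw [coeff_C_mul, C_1, coeff_X_add_one_pow]

theorem coeff_taylor_one_nonneg {p : ℝ[X]} (hp : ∀ k, 0 ≤ p.coeff k) (r : ℕ) :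
    0 ≤ (taylor 1 p).coeff r := by
  rw [coeff_taylor_one_eq_sum p (Nat.lt_succ_self _)]
  exact sum_nonneg fun ν _ => mul_nonneg (hp ν) (Nat.cast_nonneg _)

theorem taylor_derivative {R : Type*} [CommSemiring R] (r : R) (p : R[X]) :
    taylor r (derivative p) = derivative (taylor r p) := by
  simp [taylor_apply, derivative_comp]

theorem coeff_C_mul_sub_X_mul_derivative {R : Type*} [CommRing R] (p : R[X]) (c : R) (k : ℕ) :
    (C c * p - X * derivative p).coeff k = (c - k) * p.coeff k := by
  rcases k with _ | k
  · simp
  · simp [coeff_X_mul, coeff_derivative]; ring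

theorem coeff_mul_nonneg {p q : ℝ[X]} (hp : ∀ k, 0 ≤ p.coeff k) (hq : ∀ k, 0 ≤ q.coeff k)
    (k : ℕ) : 0 ≤ (p * q).coeff k := by
  rw [coeff_mul]
  exact sum_nonneg fun x _ => mul_nonneg (hp _) (hq _)

theorem coeff_mul_le {p q : ℝ[X]} {c A B : ℝ} (hp0 : ∀ k, 0 ≤ p.coeff k)
    (hq0 : ∀ k, 0 ≤ q.coeff k) (hp : ∀ k, p.coeff k ≤ c ^ k * A) (hq : ∀ k, q.coeff k ≤ c ^ k * B)
    (s : ℕ) : (p * q).coeff s ≤ (s + 1) * c ^ s * (A * B) := by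
  rw [coeff_mul]
  calc ∑ x ∈ antidiagonal s, p.coeff x.1 * q.coeff x.2
      ≤ ∑ x ∈ antidiagonal s, c ^ s * (A * B) := sum_le_sum fun x hx => by
        rw [← mem_antidiagonal.1 hx, pow_add, mul_mul_mul_comm]
        exact mul_le_mul (hp _) (hq _) (hq0 _) ((hp0 _).trans (hp _))
    _ = (s + 1) * c ^ s * (A * B) := by
        rw [sum_const, Nat.card_antidiagonal, nsmul_eq_mul]; push_cast; ring

theorem bonferroni_kernel_nonneg (k t ν : ℕ) :
    0 ≤ (-1 : ℤ) ^ t * (∑ j ∈ range (t + 1), (-1) ^ j * ((k + j).choose k * ν.choose (k + j) : ℤ)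
      - if ν = k then 1 else 0) := by
  have hchoose : ∀ j, (k + j).choose k * ν.choose (k + j) = ν.choose k * (ν - k).choose j := by
    intro j
    rw [mul_comm, Nat.choose_mul (Nat.le_add_right k j), Nat.add_sub_cancel_left]
  simp_rw [← Nat.cast_mul, hchoose, Nat.cast_mul, mul_left_comm _ (ν.choose k : ℤ), ← mul_sum]
  -- for `ν > k` the remaining alternating sum is `(-1) ^ t * (ν - k - 1).choose t`
  rcases lt_trichotomy ν k with hlt | rfl | hgt
  · simp [Nat.choose_eq_zero_of_lt hlt, hlt.ne]
  · simp [sum_range_succ', Nat.choose_zero_succ]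
  obtain ⟨M, hM⟩ : ∃ M, ν - k = M + 1 := ⟨ν - k - 1, by omega⟩
  rw [hM, Int.alternating_sum_range_choose_eq_choose, if_neg hgt.ne', sub_zero,
    mul_left_comm (ν.choose k : ℤ), ← mul_assoc, ← mul_pow]
  simp only [mul_neg, mul_one, neg_neg, one_pow, one_mul]
  positivity

theorem bonferroni (p : ℝ[X]) (hp : ∀ ν, 0 ≤ p.coeff ν) (k t : ℕ) :
    0 ≤ (-1) ^ t * (∑ j ∈ range (t + 1),
      (-1) ^ j * (k + j).choose k * (taylor 1 p).coeff (k + j) - p.coeff k) := by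
  set N := p.natDegree + k + 1
  have hdeg : p.natDegree < N := by omega
  have hsum : ∑ j ∈ range (t + 1), (-1) ^ j * (k + j).choose k * (taylor 1 p).coeff (k + j)
      - p.coeff k = ∑ ν ∈ range N, p.coeff ν * (∑ j ∈ range (t + 1),
        (-1) ^ j * ((k + j).choose k * ν.choose (k + j) : ℝ) - if ν = k then 1 else 0) := by
    simp_rw [coeff_taylor_one_eq_sum p hdeg, mul_sub, sum_sub_distrib, mul_ite, mul_one, mul_zero,
      sum_ite_eq', if_pos (mem_range.2 (by omega : k < N)), mul_sum]
    rw [sum_comm]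
    congr 1
    refine sum_congr rfl fun ν _ => sum_congr rfl fun j _ => by ring
  rw [hsum, mul_sum]
  refine sum_nonneg fun ν _ => ?_
  rw [mul_left_comm]
  exact mul_nonneg (hp ν) (by exact_mod_cast bonferroni_kernel_nonneg k t ν)

theorem tendsto_of_alternating_bounds {x A : ℕ → ℝ} {S : ℕ → ℕ → ℝ} {L : ℝ}
    (hS : ∀ t, Tendsto (S t) atTop (𝓝 (A t))) (hA : Tendsto A atTop (𝓝 L))
    (hx : ∀ t n, 0 ≤ (-1) ^ t * (S t n - x n)) : Tendsto x atTop (𝓝 L) := by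
  refine tendsto_order.2 ⟨fun a ha => ?_, fun b hb => ?_⟩
  · obtain ⟨t, ht⟩ := ((hA.comp (tendsto_atTop_mono (fun t => by omega : ∀ t, t ≤ 2 * t + 1)
      tendsto_id)).eventually (lt_mem_nhds ha)).exists
    refine ((hS _).eventually (lt_mem_nhds ht)).mono fun n hn => hn.trans_le ?_
    simpa [pow_succ, pow_mul] using hx (2 * t + 1) n
  · obtain ⟨t, ht⟩ := ((hA.comp (tendsto_atTop_mono (fun t => by omega : ∀ t, t ≤ 2 * t)
      tendsto_id)).eventually (gt_mem_nhds hb)).exists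
    refine ((hS _).eventually (gt_mem_nhds ht)).mono fun n hn => lt_of_le_of_lt ?_ hn
    simpa [pow_mul] using hx (2 * t) n

theorem tendsto_sum_neg_one_pow_mul_choose_div_factorial (k : ℕ) :
    Tendsto (fun t => ∑ j ∈ range (t + 1), (-1) ^ j * (k + j).choose k * ((k + j)! : ℝ)⁻¹)
      atTop (𝓝 (Real.exp (-1) / k !)) := by
  have hexp : Tendsto (fun t => ∑ j ∈ range t, (-1 : ℝ) ^ j / j !) atTop (𝓝 (Real.exp (-1))) := by
    rw [Real.exp_eq_exp_ℝ]
    exact (NormedSpace.expSeries_div_hasSum_exp (-1 : ℝ)).tendsto_sum_nat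
  refine ((hexp.comp (tendsto_add_atTop_nat 1)).div_const (k ! : ℝ)).congr fun t => ?_
  simp only [Function.comp_apply, sum_div]
  refine sum_congr rfl fun j _ => ?_
  rw [Nat.cast_add_choose]
  field_simp

theorem tendsto_coeff_div_of_tendsto_coeff_taylor_div {p : ℕ → ℝ[X]} {M : ℕ → ℝ}
    (hp : ∀ n k, 0 ≤ (p n).coeff k) (hM : ∀ n, 0 ≤ M n)
    (hmom : ∀ r, Tendsto (fun n => (taylor 1 (p n)).coeff r / M n) atTop (𝓝 (r ! : ℝ)⁻¹))
    (k : ℕ) : Tendsto (fun n => (p n).coeff k / M n) atTop (𝓝 (Real.exp (-1) / k !)) := by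
  refine tendsto_of_alternating_bounds (S := fun t n => ∑ j ∈ range (t + 1),
      (-1) ^ j * (k + j).choose k * ((taylor 1 (p n)).coeff (k + j) / M n))
    (fun t => tendsto_finsetSum _ fun j _ => (hmom (k + j)).const_mul _)
    (tendsto_sum_neg_one_pow_mul_choose_div_factorial k) fun t n => ?_
  simp only [← mul_div_assoc, ← sum_div, ← sub_div]
  exact div_nonneg (bonferroni (p n) (hp n) k t) (hM n)

theorem le_mul_exp_neg_sum_of_le_one_sub_mul {w a : ℕ → ℝ} {N : ℕ}
    (ha : ∀ n ≥ N, 0 ≤ a n ∧ a n ≤ 1) (hw : ∀ n ≥ N, w (n + 1) ≤ (1 - a n) * w n) :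
    ∀ n ≥ N, w n ≤ max (w N) 0 * Real.exp (-∑ k ∈ Ico N n, a k) := by
  intro n hn
  induction n, hn using Nat.le_induction with
  | base => simp
  | succ n hn ih =>
    rw [sum_Ico_succ_top hn, neg_add, Real.exp_add, ← mul_assoc]
    have hB : 0 ≤ max (w N) 0 * Real.exp (-∑ k ∈ Ico N n, a k) := by positivity
    calc w (n + 1) ≤ (1 - a n) * w n := hw n hn
      _ ≤ (1 - a n) * (max (w N) 0 * Real.exp (-∑ k ∈ Ico N n, a k)) :=
        mul_le_mul_of_nonneg_left ih (by linarith [(ha n hn).2])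
      _ ≤ Real.exp (-a n) * (max (w N) 0 * Real.exp (-∑ k ∈ Ico N n, a k)) := by
        gcongr
        linarith [Real.add_one_le_exp (-a n)]
      _ = _ := by ring

/-- A discrete version of `x' = a (L - x) + o(a)`: when `∑ a = ∞`, the solution is attracted to
`L`. -/
theorem tendsto_of_eq_one_sub_mul_add {x a c : ℕ → ℝ} {L : ℝ}
    (ha : ∀ᶠ n in atTop, 0 < a n ∧ a n ≤ 1)
    (hsum : Tendsto (fun n => ∑ k ∈ range n, a k) atTop atTop)
    (hc : Tendsto (fun n => c n / a n) atTop (𝓝 L))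
    (hx : ∀ᶠ n in atTop, x (n + 1) = (1 - a n) * x n + c n) :
    Tendsto x atTop (𝓝 L) := by
  refine Metric.tendsto_nhds.2 fun ε hε => ?_
  obtain ⟨N, hN⟩ := eventually_atTop.1 ((ha.and hx).and
    (Metric.tendsto_nhds.1 hc (ε / 2) (half_pos hε)))
  have hw : ∀ n ≥ N, |x (n + 1) - L| - ε / 2 ≤ (1 - a n) * (|x n - L| - ε / 2) := by
    intro n hn
    obtain ⟨⟨⟨ha0, ha1⟩, hxn⟩, hcn⟩ := hN n hn
    have hcL : |c n - L * a n| ≤ ε / 2 * a n := by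
      rw [Real.dist_eq, div_sub' ha0.ne', abs_div, abs_of_pos ha0, div_lt_iff₀ ha0] at hcn
      rw [mul_comm L]; exact hcn.le
    have hsplit : x (n + 1) - L = (1 - a n) * (x n - L) + (c n - L * a n) := by rw [hxn]; ring
    have := abs_add_le ((1 - a n) * (x n - L)) (c n - L * a n)
    rw [abs_mul, abs_of_nonneg (by linarith : 0 ≤ 1 - a n), ← hsplit] at this
    linarith
  have hbound := le_mul_exp_neg_sum_of_le_one_sub_mul (w := fun n => |x n - L| - ε / 2)
    (fun n hn => ⟨(hN n hn).1.1.1.le, (hN n hn).1.1.2⟩) hw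
  have hsumIco : Tendsto (fun n => ∑ k ∈ Ico N n, a k) atTop atTop :=
    (tendsto_atTop_add_const_right _ (-∑ k ∈ range N, a k) hsum).congr' <|
      (eventually_ge_atTop N).mono fun n hn => by simp only [sum_Ico_eq_sub _ hn, sub_eq_add_neg]
  have hsmall : ∀ᶠ n in atTop,
      max (|x N - L| - ε / 2) 0 * Real.exp (-∑ k ∈ Ico N n, a k) < ε / 2 :=
    ((Real.tendsto_exp_neg_atTop_nhds_zero.comp hsumIco).const_mul
      (max (|x N - L| - ε / 2) 0)).eventually (gt_mem_nhds (by simpa using half_pos hε))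
  filter_upwards [hsmall, eventually_ge_atTop N] with n hn hnN
  rw [Real.dist_eq]
  linarith [hbound n hnN]

theorem tendsto_sum_range_atTop_of_div_le {a : ℕ → ℝ} {c : ℝ} (hc : 0 < c)
    (ha : ∀ n, c / (n + 1) ≤ a n) : Tendsto (fun n => ∑ k ∈ range n, a k) atTop atTop := by
  refine tendsto_atTop_mono (fun n => sum_le_sum fun k _ => ha k) ?_
  simpa [mul_sum, div_eq_mul_inv] using
    (Real.tendsto_sum_range_one_div_nat_succ_atTop.const_mul_atTop hc)

def innerConv {R : Type*} [Semiring R] (f : ℕ → R) (n : ℕ) : R := ∑ k ∈ Ioo 0 n, f k * f (n - k)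

theorem innerConv_zero {R : Type*} [Semiring R] (f : ℕ → R) : innerConv f 0 = 0 := rfl

theorem innerConv_one {R : Type*} [Semiring R] (f : ℕ → R) : innerConv f 1 = 0 := rfl

theorem sum_range_succ_eq_add_add_sum_Ioo {M : Type*} [AddCommMonoid M] (f : ℕ → M) {n : ℕ}
    (hn : 1 ≤ n) : ∑ k ∈ range (n + 1), f k = f 0 + f n + ∑ k ∈ Ioo 0 n, f k := by
  have hsplit : range (n + 1) = insert 0 (insert n (Ioo 0 n)) := by
    ext x
    simp only [mem_range, mem_insert, mem_Ioo]
    omega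
  rw [hsplit, sum_insert (by simp; omega), sum_insert (by simp), add_assoc]

theorem coeff_innerConv_nonneg {p : ℕ → ℝ[X]} {n : ℕ} (hp : ∀ i < n, ∀ k, 0 ≤ (p i).coeff k)
    (k : ℕ) : 0 ≤ (innerConv p n).coeff k := by
  rw [innerConv, finsetSum_coeff]
  refine sum_nonneg fun i hi => coeff_mul_nonneg (hp _ ?_) (hp _ ?_) k <;>
    · rw [mem_Ioo] at hi; omega

structure IsMapCount (m : ℕ → ℕ) : Prop where
  zero : m 0 = 1
  succ : ∀ n, m (n + 1) = (∑ k ∈ range (n + 1), m k * m (n - k)) + (2 * (n + 1) - 1) * m n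

namespace IsMapCount

variable {m : ℕ → ℕ} (hm : IsMapCount m)
include hm

theorem one : m 1 = 2 := by
  simpa [hm.zero] using hm.succ 0

theorem succ_eq {n : ℕ} (hn : 1 ≤ n) : m (n + 1) = (2 * n + 3) * m n + innerConv m n := by
  rw [hm.succ, sum_range_succ_eq_add_add_sum_Ioo _ hn, hm.zero, innerConv,
    show 2 * (n + 1) - 1 = 2 * n + 1 by omega]
  simp only [Nat.sub_zero, Nat.sub_self, hm.zero]
  ring

theorem innerConv_two : innerConv m 2 = 4 := by
  simp [innerConv, show Ioo 0 2 = {1} by rfl, hm.one]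

theorem two : m 2 = 10 := by
  simp [hm.succ_eq le_rfl, hm.one, innerConv_one]

theorem pos (n : ℕ) : 0 < m n := by
  induction n with
  | zero => simp [hm.zero]
  | succ n ih =>
    have : 0 < (2 * (n + 1) - 1) * m n := Nat.mul_pos (by omega) ih
    rw [hm.succ]
    omega

theorem mul_le_succ {n : ℕ} (hn : 1 ≤ n) : (2 * n + 3) * m n ≤ m (n + 1) := by
  rw [hm.succ_eq hn]; omega

theorem succ_le_of_innerConv_le {n : ℕ} (h : innerConv m n ≤ m n) :
    m (n + 1) ≤ (2 * n + 4) * m n := by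
  rcases Nat.eq_zero_or_pos n with rfl | hn
  · simp [hm.one, hm.zero]
  · rw [hm.succ_eq hn]; linarith

/-- Moving `k` one step towards the middle multiplies `m k * m (n - k)` by at most
`(2 k + 4) / (2 (n - k - 1) + 3) ≤ 1`. -/
theorem mul_sub_le_mul_sub {n j k : ℕ}
    (hU : ∀ i, 2 * i + 2 ≤ n → m (i + 1) ≤ (2 * i + 4) * m i)
    (hj : 1 ≤ j) (hjk : j ≤ k) (hkn : k ≤ n - j) : m k * m (n - k) ≤ m j * m (n - j) := by
  have hanti : AntitoneOn (fun k => m k * m (n - k)) (Set.Icc 1 (n / 2)) := by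
    refine antitoneOn_of_add_one_le Set.ordConnected_Icc fun k _ hk hk1 => ?_
    simp only [Set.mem_Icc] at hk hk1
    have hlow := hm.mul_le_succ (n := n - k - 1) (by omega)
    rw [show n - k - 1 + 1 = n - k by omega] at hlow
    calc m (k + 1) * m (n - (k + 1)) ≤ (2 * (n - k - 1) + 3) * m k * m (n - k - 1) := by
          rw [show n - (k + 1) = n - k - 1 by omega]
          gcongr
          exact (hU k (by omega)).trans (Nat.mul_le_mul_right _ (by omega))
      _ = m k * ((2 * (n - k - 1) + 3) * m (n - k - 1)) := by ring
      _ ≤ m k * m (n - k) := Nat.mul_le_mul_left _ hlow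
  rcases le_or_gt k (n / 2) with hk | hk
  · exact hanti ⟨hj, by omega⟩ ⟨by omega, hk⟩ hjk
  · have := hanti (a := j) (b := n - k) ⟨hj, by omega⟩ ⟨by omega, by omega⟩ (by omega)
    dsimp only at this
    rwa [Nat.sub_sub_self (by omega), mul_comm] at this

theorem innerConv_le (n : ℕ) : innerConv m n ≤ m n := by
  induction n using Nat.strong_induction_on with
  | _ n ih =>
  match n with
  | 0 | 1 => simp [innerConv_zero, innerConv_one]
  | p + 2 =>
    have hterm : ∀ k ∈ Ioo 0 (p + 2), m k * m (p + 2 - k) ≤ 2 * m (p + 1) := fun k hk => by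
      rw [mem_Ioo] at hk
      have := hm.mul_sub_le_mul_sub (n := p + 2) (j := 1) (k := k)
        (fun i hi => hm.succ_le_of_innerConv_le (ih i (by omega))) le_rfl (by omega) (by omega)
      rwa [hm.one] at this
    have hsum := sum_le_card_nsmul _ _ _ hterm
    rw [Nat.card_Ioo, smul_eq_mul, show p + 2 - 0 - 1 = p + 1 by omega] at hsum
    have : (2 * p + 5) * m (p + 1) ≤ m (p + 2) := hm.mul_le_succ (n := p + 1) (by omega)
    rw [innerConv]
    linarith

theorem succ_le (n : ℕ) : m (n + 1) ≤ (2 * n + 4) * m n :=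
  hm.succ_le_of_innerConv_le (hm.innerConv_le n)

theorem innerConv_add_three_le (n : ℕ) :
    innerConv m (n + 3) ≤ 4 * m (n + 2) + 10 * n * m (n + 1) := by
  have hsplit : Ioo 0 (n + 3) = insert 1 (insert (n + 2) (Ioo 1 (n + 2))) := by
    ext x
    simp only [mem_Ioo, mem_insert]
    omega
  have hterm : ∀ k ∈ Ioo 1 (n + 2), m k * m (n + 3 - k) ≤ 10 * m (n + 1) := fun k hk => by
    rw [mem_Ioo] at hk
    rw [← hm.two, show n + 1 = n + 3 - 2 by omega]
    exact hm.mul_sub_le_mul_sub (fun i _ => hm.succ_le i) (by omega) (by omega) (by omega)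
  have hsum := sum_le_card_nsmul _ _ _ hterm
  rw [Nat.card_Ioo, smul_eq_mul, show n + 2 - 1 - 1 = n by omega] at hsum
  rw [innerConv, hsplit, sum_insert (by simp only [mem_insert, mem_Ioo]; omega),
    sum_insert (by simp),
    show n + 3 - 1 = n + 2 by omega, show n + 3 - (n + 2) = 1 by omega, hm.one]
  linarith

theorem four_mul_innerConv_le (n : ℕ) : 4 * innerConv m n ≤ 3 * m n := by
  match n with
  | 0 | 1 => simp [innerConv_zero, innerConv_one]
  | 2 => rw [hm.innerConv_two, hm.two]; norm_num
  | n + 3 =>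
    have h1 : (2 * n + 5) * m (n + 1) ≤ m (n + 2) := hm.mul_le_succ (n := n + 1) (by omega)
    have h2 : (2 * n + 7) * m (n + 2) ≤ m (n + 3) := hm.mul_le_succ (n := n + 2) (by omega)
    have h3 := hm.innerConv_add_three_le n
    have h4 : 40 * n * m (n + 1) ≤ (6 * n + 5) * m (n + 2) :=
      calc 40 * n * m (n + 1) ≤ (6 * n + 5) * ((2 * n + 5) * m (n + 1)) := by
            rw [← mul_assoc]; exact Nat.mul_le_mul_right _ (by nlinarith)
        _ ≤ (6 * n + 5) * m (n + 2) := by gcongr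
    linarith

theorem innerConv_succ_le {n : ℕ} (hn : 1 ≤ n) : innerConv m (n + 1) ≤ 9 * m n := by
  match n, hn with
  | 1, _ => rw [hm.innerConv_two, hm.one]; norm_num
  | n + 2, _ =>
    have h1 : (2 * n + 5) * m (n + 1) ≤ m (n + 2) := hm.mul_le_succ (n := n + 1) (by omega)
    have h3 := hm.innerConv_add_three_le n
    linarith

theorem innerConv_div_le (n : ℕ) : ((innerConv m n : ℕ) : ℝ) / m n ≤ 3 / 4 := by
  rw [div_le_iff₀ (by exact_mod_cast hm.pos n)]
  have := hm.four_mul_innerConv_le n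
  have : 4 * ((innerConv m n : ℕ) : ℝ) ≤ 3 * m n := by exact_mod_cast this
  linarith

theorem tendsto_innerConv_div : Tendsto (fun n => ((innerConv m n : ℕ) : ℝ) / m n) atTop (𝓝 0) := by
  refine tendsto_of_tendsto_of_tendsto_of_le_of_le' tendsto_const_nhds
    (tendsto_const_div_atTop_nhds_zero_nat 9) (.of_forall fun n => by positivity) ?_
  filter_upwards [eventually_ge_atTop 2] with n hn
  obtain ⟨p, rfl⟩ : ∃ p, n = p + 1 := ⟨n - 1, by omega⟩
  have hS : ((innerConv m (p + 1) : ℕ) : ℝ) ≤ 9 * m p := by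
    exact_mod_cast hm.innerConv_succ_le (n := p) (by omega)
  have hM : ((2 * p + 3 : ℕ) : ℝ) * m p ≤ m (p + 1) := by
    exact_mod_cast hm.mul_le_succ (n := p) (by omega)
  have hp : (0 : ℝ) < m p := by exact_mod_cast hm.pos p
  rw [div_le_div_iff₀ (by exact_mod_cast hm.pos _) (by positivity)]
  push_cast at hM ⊢
  nlinarith

theorem cast_succ_eq {n : ℕ} (hn : 1 ≤ n) :
    (m (n + 1) : ℝ) = (2 * n + 3 + ((innerConv m n : ℕ) : ℝ) / m n) * m n := by
  rw [add_mul, div_mul_cancel₀ _ (by exact_mod_cast (hm.pos n).ne'), hm.succ_eq hn]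
  push_cast
  ring

end IsMapCount

structure IsLeafPoly (l : ℕ → ℝ[X]) : Prop where
  zero : l 0 = X
  succ : ∀ n : ℕ, l (n + 1) = (C 2 - X) * l n + C (2 * (n : ℝ)) * l n +
    (∑ i ∈ range (n + 1), l i * l (n - i)) + (1 - X) * derivative (l n)

namespace IsLeafPoly

variable {l : ℕ → ℝ[X]} (hl : IsLeafPoly l) {m : ℕ → ℕ}
include hl

theorem one : l 1 = X + 1 := by
  rw [hl.succ]
  simp only [hl.zero, zero_add, sum_range_one, Nat.cast_zero, mul_zero, map_zero, zero_mul,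
    add_zero, derivative_X, map_ofNat]
  ring

/-- The two end terms `X * l n` of the convolution turn `(2 - X) l n` into `(2 + X) l n`. -/
theorem succ_eq {n : ℕ} (hn : 1 ≤ n) : l (n + 1) =
    (C (2 * n + 2 : ℝ) * l n - X * derivative (l n)) + X * l n + derivative (l n) +
      innerConv l n := by
  rw [hl.succ, sum_range_succ_eq_add_add_sum_Ioo _ hn, hl.zero, Nat.sub_zero, Nat.sub_self,
    hl.zero, innerConv]
  simp only [map_add, map_mul, map_ofNat, map_natCast]
  ring

theorem natDegree_le (n : ℕ) : (l n).natDegree ≤ n + 1 := by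
  induction n using Nat.strong_induction_on with
  | _ n ih =>
  match n with
  | 0 => simp [hl.zero]
  | n + 1 =>
    have ihn := ih n (by omega)
    have hderiv : (derivative (l n)).natDegree ≤ n + 1 :=
      (natDegree_derivative_le _).trans (by omega)
    rw [hl.succ]
    refine natDegree_add_le_of_degree_le (natDegree_add_le_of_degree_le
      (natDegree_add_le_of_degree_le ?_ ?_) ?_) ?_
    · exact natDegree_mul_le_of_le (by compute_degree : (C 2 - X : ℝ[X]).natDegree ≤ 1) ihn
        |>.trans (by omega)
    · exact natDegree_mul_le_of_le (natDegree_C _).le ihn |>.trans (by omega)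
    · refine natDegree_sum_le_of_forall_le _ _ fun i hi => ?_
      rw [mem_range] at hi
      exact natDegree_mul_le_of_le (ih i (by omega)) (ih (n - i) (by omega)) |>.trans (by omega)
    · exact natDegree_mul_le_of_le (by compute_degree : (1 - X : ℝ[X]).natDegree ≤ 1) hderiv
        |>.trans (by omega)

theorem coeff_nonneg (n k : ℕ) : 0 ≤ (l n).coeff k := by
  induction n using Nat.strong_induction_on generalizing k with
  | _ n ih =>
  match n with
  | 0 => rw [hl.zero, coeff_X]; split_ifs <;> norm_num
  | 1 => rw [hl.one, coeff_add, coeff_X, coeff_one]; split_ifs <;> norm_num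
  | n + 2 =>
    have ihn := ih (n + 1) (by omega)
    rw [hl.succ_eq (by omega), coeff_add, coeff_add, coeff_add, coeff_C_mul_sub_X_mul_derivative]
    refine add_nonneg (add_nonneg (add_nonneg ?_ ?_) ?_)
      (coeff_innerConv_nonneg (fun i hi => ih i (by omega)) k)
    · rcases le_or_gt k (n + 2) with hk | hk
      · have : (k : ℝ) ≤ n + 2 := by exact_mod_cast hk
        exact mul_nonneg (by push_cast; linarith) (ihn k)
      · rw [coeff_eq_zero_of_natDegree_lt ((hl.natDegree_le _).trans_lt (by omega)), mul_zero]
    · rcases k with _ | k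
      · simp
      · rw [coeff_X_mul]; exact ihn k
    · rw [coeff_derivative]; exact mul_nonneg (ihn _) (by positivity)

theorem eval_one (hm : IsMapCount m) (n : ℕ) : (l n).eval 1 = m n := by
  induction n using Nat.strong_induction_on with
  | _ n ih =>
  match n with
  | 0 => simp [hl.zero, hm.zero]
  | n + 1 =>
    rw [hl.succ, hm.succ, show 2 * (n + 1) - 1 = 2 * n + 1 by omega]
    simp only [eval_add, eval_mul, eval_sub, eval_C, eval_X, Polynomial.eval_one, eval_finsetSum]
    rw [sum_congr rfl fun i hi => by rw [ih i (by simp at hi; omega), ih (n - i) (by omega)],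
      ih n (by omega)]
    push_cast
    ring

theorem coeff_taylor_zero (hm : IsMapCount m) (n : ℕ) :
    (taylor 1 (l n)).coeff 0 = m n := by
  rw [taylor_coeff_zero, hl.eval_one hm]

theorem taylor_succ_eq {n : ℕ} (hn : 1 ≤ n) : taylor 1 (l (n + 1)) =
    (C (2 * n + 3 : ℝ) * taylor 1 (l n) - X * derivative (taylor 1 (l n))) +
      X * taylor 1 (l n) + innerConv (fun i => taylor 1 (l i)) n := by
  rw [hl.succ_eq hn]
  simp only [innerConv, map_add, map_sub, map_sum, taylor_mul, taylor_C, taylor_X,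
    taylor_derivative]
  simp only [map_mul, map_ofNat, map_natCast, map_one]
  ring

theorem coeff_taylor_succ_succ {n : ℕ} (hn : 1 ≤ n) (s : ℕ) :
    (taylor 1 (l (n + 1))).coeff (s + 1) =
      (2 * n + 2 - s) * (taylor 1 (l n)).coeff (s + 1) + (taylor 1 (l n)).coeff s +
        (innerConv (fun i => taylor 1 (l i)) n).coeff (s + 1) := by
  rw [hl.taylor_succ_eq hn, coeff_add, coeff_add, coeff_C_mul_sub_X_mul_derivative, coeff_X_mul]
  push_cast
  ring

theorem coeff_innerConv_taylor_le {n : ℕ}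
    (hbound : ∀ i < n, ∀ r, (taylor 1 (l i)).coeff r ≤ 4 ^ r * m i) (s : ℕ) :
    (innerConv (fun i => taylor 1 (l i)) n).coeff s ≤ (s + 1) * 4 ^ s * (innerConv m n : ℕ) := by
  rw [innerConv, innerConv, finsetSum_coeff, Nat.cast_sum, mul_sum]
  refine sum_le_sum fun i hi => ?_
  rw [mem_Ioo] at hi
  push_cast
  exact coeff_mul_le (coeff_taylor_one_nonneg (hl.coeff_nonneg i))
    (coeff_taylor_one_nonneg (hl.coeff_nonneg (n - i))) (hbound i hi.2) (hbound (n - i) (by omega))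
    s

/-- The base `4` is what makes the induction close, given `4 * innerConv m n ≤ 3 * m n`. -/
theorem coeff_taylor_le (hm : IsMapCount m) (n r : ℕ) :
    (taylor 1 (l n)).coeff r ≤ 4 ^ r * m n := by
  induction n using Nat.strong_induction_on generalizing r with
  | _ n ih =>
  match n, r with
  | 0, r => rcases r with _ | _ | r <;> norm_num [hl.zero, hm.zero, coeff_X, coeff_one]
  | 1, r =>
    rw [hl.one, map_add, taylor_X, taylor_one, hm.one]
    rcases r with _ | _ | r <;> norm_num [coeff_X, coeff_one]
  | n + 1, 0 => rw [hl.coeff_taylor_zero hm]; simp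
  | n + 2, s + 1 =>
    rcases lt_or_ge (n + 3) (s + 1) with hs | hs
    · rw [coeff_eq_zero_of_natDegree_lt
        (by rw [natDegree_taylor]; linarith [hl.natDegree_le (n + 2)])]
      positivity
    have hM : (0 : ℝ) ≤ m (n + 1) := Nat.cast_nonneg _
    have hS : 4 * ((innerConv m (n + 1) : ℕ) : ℝ) ≤ 3 * m (n + 1) := by
      exact_mod_cast hm.four_mul_innerConv_le (n + 1)
    have hrec : (m (n + 2) : ℝ) = (2 * (n + 1) + 3) * m (n + 1) + (innerConv m (n + 1) : ℕ) := by
      rw [hm.succ_eq (n := n + 1) (by omega)]; push_cast; ring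
    have hcoeff : (0 : ℝ) ≤ 2 * (n + 1 : ℕ) + 2 - s := by
      have : (s : ℝ) ≤ n + 2 := by exact_mod_cast (by omega : s ≤ n + 2)
      push_cast; linarith
    rw [hl.coeff_taylor_succ_succ (n := n + 1) (by omega) s, hrec]
    have hmid := hl.coeff_innerConv_taylor_le (n := n + 1) (fun i hi => ih i (by omega)) (s + 1)
    have h1 := mul_le_mul_of_nonneg_left (ih (n + 1) (by omega) (s + 1)) hcoeff
    have h0 := ih (n + 1) (by omega) s
    have hx : (0 : ℝ) ≤ 4 ^ s := by positivity
    have hinner := mul_le_mul_of_nonneg_left hS (by positivity : (0 : ℝ) ≤ (s + 1) * 4 ^ s)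
    have hsM : (0 : ℝ) ≤ s * 4 ^ s * m (n + 1) := by positivity
    rw [pow_succ] at hmid h1 ⊢
    push_cast at hmid h1 ⊢
    linarith

theorem tendsto_coeff_innerConv_taylor_div (hm : IsMapCount m) (s : ℕ) :
    Tendsto (fun n => (innerConv (fun i => taylor 1 (l i)) n).coeff s / m n) atTop (𝓝 0) := by
  have hlim := hm.tendsto_innerConv_div.const_mul ((s + 1) * 4 ^ s : ℝ)
  rw [mul_zero] at hlim
  refine tendsto_of_tendsto_of_tendsto_of_le_of_le tendsto_const_nhds hlim (fun n => ?_) fun n => ?_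
  · exact div_nonneg (coeff_innerConv_nonneg (fun i _ => coeff_taylor_one_nonneg
      (hl.coeff_nonneg i)) s) (Nat.cast_nonneg _)
  · rw [← mul_div_assoc]
    exact div_le_div_of_nonneg_right
      (hl.coeff_innerConv_taylor_le (fun i _ r => hl.coeff_taylor_le hm i r) s) (Nat.cast_nonneg _)

theorem tendsto_coeff_taylor_div (hm : IsMapCount m) (r : ℕ) :
    Tendsto (fun n => (taylor 1 (l n)).coeff r / m n) atTop (𝓝 (r ! : ℝ)⁻¹) := by
  induction r with
  | zero =>
    refine tendsto_const_nhds.congr fun n => ?_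
    rw [hl.coeff_taylor_zero hm, div_self (by exact_mod_cast (hm.pos n).ne'), Nat.factorial_zero,
      Nat.cast_one, inv_one]
  | succ r ih =>
    set σ : ℕ → ℝ := fun n => ((innerConv m n : ℕ) : ℝ) / m n
    set μ : ℕ → ℝ := fun n => (innerConv (fun i => taylor 1 (l i)) n).coeff (r + 1) / m n with hμ
    have hσ0 : ∀ n, 0 ≤ σ n := fun n => by positivity
    have hσ1 : ∀ n, σ n ≤ 1 := fun n => (hm.innerConv_div_le n).trans (by norm_num)
    refine tendsto_of_eq_one_sub_mul_add (a := fun n => (r + 1 + σ n) / (2 * n + 3 + σ n))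
      (c := fun n => ((taylor 1 (l n)).coeff r / m n + μ n) / (2 * n + 3 + σ n)) ?_ ?_ ?_ ?_
    · filter_upwards [eventually_ge_atTop r] with n hn
      have : (r : ℝ) ≤ n := by exact_mod_cast hn
      exact ⟨by positivity, (div_le_one (by positivity)).2 (by linarith)⟩
    · refine tendsto_sum_range_atTop_of_div_le (c := 1 / 4) (by norm_num) fun n => ?_
      rw [div_div]
      exact div_le_div₀ (by positivity) (by linarith [hσ0 n]) (by positivity)
        (by linarith [hσ1 n, (Nat.cast_nonneg n : (0 : ℝ) ≤ n)])
    · have hlim := (ih.add (hl.tendsto_coeff_innerConv_taylor_div hm (r + 1))).div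
        (hm.tendsto_innerConv_div.const_add (r + 1 : ℝ)) (by positivity)
      have hL : (r ! : ℝ)⁻¹ / (r + 1) = ((r + 1)! : ℝ)⁻¹ := by
        rw [Nat.factorial_succ]; push_cast; field_simp
      rw [add_zero, add_zero, hL] at hlim
      refine hlim.congr fun n => ?_
      have hD : 0 < 2 * (n : ℝ) + 3 + σ n := by positivity
      rw [Pi.div_apply, div_div_div_cancel_right₀ hD.ne']
    · filter_upwards [eventually_ge_atTop 1] with n hn
      have hrec : (m (n + 1) : ℝ) = (2 * n + 3 + σ n) * m n := hm.cast_succ_eq hn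
      have hD : 0 < 2 * (n : ℝ) + 3 + σ n := by positivity
      simp only [hμ]
      rw [hl.coeff_taylor_succ_succ hn, hrec]
      field_simp
      ring

end IsLeafPoly

end RootedMaps

open RootedMaps in
/-- The number of leaves of a uniform random rooted map with `n` edges
converges in distribution to a Poisson law of parameter `1`: for every `k ≥ 0`,
`lim_{n→∞} ℓ_{n,k}/m(n) = e^{−1}/k!`. -/
theorem leaves_poisson_law
    (m : ℕ → ℕ) (hm0 : m 0 = 1)
    (hm : ∀ n : ℕ, m (n + 1) =
      (∑ k ∈ Finset.range (n + 1), m k * m (n - k)) + (2 * (n + 1) - 1) * m n)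
    (l : ℕ → Polynomial ℝ) (hl0 : l 0 = X)
    (hl : ∀ n : ℕ, l (n + 1) =
      (C 2 - X) * l n + C (2 * (n : ℝ)) * l n +
        (∑ i ∈ Finset.range (n + 1), l i * l (n - i)) +
        (1 - X) * derivative (l n)) :
    ∀ k : ℕ,
      Tendsto (fun n : ℕ => (l n).coeff k / (m n : ℝ)) atTop
        (nhds (Real.exp (-1) / (k.factorial : ℝ))) := by
  have hm' : IsMapCount m := ⟨hm0, hm⟩
  have hl' : IsLeafPoly l := ⟨hl0, hl⟩
  exact tendsto_coeff_div_of_tendsto_coeff_taylor_div hl'.coeff_nonneg (fun n => Nat.cast_nonneg _)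
    (hl'.tendsto_coeff_taylor_div hm')
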